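/- arXiv:2410.20440 — 2 statements merged into one kernel-verified Lean document; each statement's English description precedes it below -/
import Mathlib

section
/- Let A be a left brace of cardinality p^n for a prime p > 3 and a natural number n. Suppose that, with c = ⌊(p − 1)/4⌋, for every a, b ∈ A the element e'_c(a, b) lies in p·L(b), where L(b) is the left ideal of A generated by b. vThen A satisfies Property 1. -/
/-- A left brace: `(A, +)` abelian group, `(A, ∘)` a group (with identity `cone`
and inverse `cinv`), satisfying `a ∘ (b + c) + a = a ∘ b + a ∘ c`. -/
class LeftBrace (A : Type*) extends AddCommGroup A where
  circ : A → A → A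
  cone : A
  cinv : A → A
  circ_assoc : ∀ a b c : A, circ (circ a b) c = circ a (circ b c)
  circ_cone : ∀ a : A, circ a cone = a
  cone_circ : ∀ a : A, circ cone a = a
  circ_cinv : ∀ a : A, circ a (cinv a) = cone
  cinv_circ : ∀ a : A, circ (cinv a) a = cone
  circ_add : ∀ a b c : A, circ a (b + c) + a = circ a b + circ a c

namespace LeftBrace

variable {A : Type*} [LeftBrace A]

/-- The brace operation `a * b = a ∘ b - a - b`. -/
def bstar (a b : A) : A := circ a b - a - b

/-- `ann (p^i) = {a : p^i • a = 0}`. -/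
def ann (p i : ℕ) : Set A := {a : A | (p ^ i : ℕ) • a = 0}

/-- `p^i • A = {p^i • a : a ∈ A}`. -/
def pA (p i : ℕ) : Set A := Set.range (fun a : A => (p ^ i : ℕ) • a)

/-- An ideal of a left brace: an additive subgroup closed under `*` on both sides. -/
def IsIdeal (I : Set A) : Prop :=
  (0 : A) ∈ I ∧ (∀ x ∈ I, ∀ y ∈ I, x + y ∈ I) ∧ (∀ x ∈ I, -x ∈ I) ∧
  (∀ a : A, ∀ x ∈ I, bstar a x ∈ I) ∧ (∀ a : A, ∀ x ∈ I, bstar x a ∈ I)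

/-- `eIter a b m = e'_m(a,b)` for `m ≥ 1`, with `eIter a b 0 = b`;
so `e'_1(a,b) = a * b` and `e'_{m+1}(a,b) = a * e'_m(a,b)`. -/
def eIter (a b : A) : ℕ → A
  | 0 => b
  | m + 1 => bstar a (eIter a b m)

/-- `circPow a j = a^{∘ j}`, the `j`-fold `∘`-product of `a` with itself. -/
def circPow (a : A) : ℕ → A
  | 0 => cone
  | j + 1 => circ a (circPow a j)

/-- Property 1 (with `c = ⌊(p-1)/4⌋`). -/
def Property1 (p : ℕ) (A : Type*) [LeftBrace A] : Prop :=
  (∀ a b : A, eIter a b ((p - 1) / 4) ∈ pA p 1) ∧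
  (∀ i : ℕ, 1 ≤ i → ∀ a : A, ∀ b ∈ ann p i, eIter a b ((p - 1) / 4) ∈ ann p (i - 1))

end LeftBrace

open LeftBrace

/-- The left ideal of a left brace generated by `b`: the smallest subset containing `b`
which is an additive subgroup and closed under `a * ·` for all `a`. -/
def leftIdealGen {A : Type*} [LeftBrace A] (b : A) : Set A :=
  ⋂₀ {S : Set A | b ∈ S ∧ (0 : A) ∈ S ∧ (∀ x ∈ S, ∀ y ∈ S, x + y ∈ S) ∧
      (∀ x ∈ S, -x ∈ S) ∧ ∀ a : A, ∀ x ∈ S, bstar a x ∈ S}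


lemma lambda_add {A : Type*} [LeftBrace A] (a x y : A) :
    circ a (x + y) - a = (circ a x - a) + (circ a y - a) := by
  have := LeftBrace.circ_add a x y
  linear_combination (norm := abel) this

lemma circ_zero {A : Type*} [LeftBrace A] (a : A) : circ a (0 : A) = a := by
  have := LeftBrace.circ_add a 0 0
  simp only [add_zero] at this
  exact (add_left_cancel this).symm

lemma lambda_nsmul {A : Type*} [LeftBrace A] (a x : A) (m : ℕ) :
    m • (circ a x - a) = circ a (m • x) - a := by
  induction m with
  | zero => simp [circ_zero]
  | succ k ih => rw [succ_nsmul, succ_nsmul, ih, ← lambda_add]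

lemma ann_closed_bstar {A : Type*} [LeftBrace A] (p i : ℕ) (a x : A)
    (hx : x ∈ (ann p i : Set A)) : bstar a x ∈ (ann p i : Set A) := by
  simp only [ann, Set.mem_setOf_eq] at *
  have : (p ^ i) • bstar a x = (p ^ i) • (circ a x - a) - (p ^ i) • x := by
    simp [bstar, smul_sub]
  rw [this, lambda_nsmul, hx, circ_zero]
  simp

theorem statement12 {A : Type*} [LeftBrace A] [Fintype A] (p n : ℕ) (hp : p.Prime)
    (hp3 : 3 < p) (hcard : Fintype.card A = p ^ n)
    (h : ∀ a b : A, ∃ y ∈ leftIdealGen b, eIter a b ((p - 1) / 4) = p • y) :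
    Property1 p A := by
  constructor
  · intro a b
    obtain ⟨y, -, hy⟩ := h a b
    exact ⟨y, by simpa [pow_one] using hy.symm⟩
  · intro i hi a b hb
    obtain ⟨y, hyL, hy⟩ := h a b
    have hsub : leftIdealGen b ⊆ (ann p i : Set A) := by
      intro z hz
      exact hz (ann p i) ⟨hb, by simp [ann], fun x hx y hy => by
        simp only [ann, Set.mem_setOf_eq] at *; rw [smul_add, hx, hy, add_zero],
        fun x hx => by simp only [ann, Set.mem_setOf_eq] at *; rw [smul_neg, hx, neg_zero],
        fun a x hx => ann_closed_bstar p i a x hx⟩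
    have hyann : (p ^ i : ℕ) • y = 0 := hsub hyL
    simp only [ann, Set.mem_setOf_eq]
    rw [hy, smul_smul, ← pow_succ]
    rw [Nat.sub_add_cancel hi]
    exact hyann
end

section
/- Let A be a left brace of cardinality p^n for a prime p > 3 and a natural number n, satisfying Property 1' and Property 1'', and let k be a natural number with p^{k(p−1)}·A = 0. Let γ be a primitive root modulo p^n, ξ = γ^{p^{n−1}}, and define on A/ann(p^{2k}) the operation [a] • [b] = [−(1 + p + ⋯ + p^n)·Σ_{i=0}^{p−2} ξ^{p−1−i}·((ξ^i·p^k·a) * b)]. Then the pre-Lie ring (A/ann(p^{2k}), +, •) satisfies Property 3. -/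
open LeftBrace

/-- Nested left-normed product `a₁ ⋄ (a₂ ⋄ (⋯ ⋄ (aₘ ⋄ b)⋯))`. -/
def nestedMul {A : Type*} (f : A → A → A) : List A → A → A
  | [], b => b
  | a :: l, b => f a (nestedMul f l b)

/-- The representative-level operation
`a • b = -(1 + p + ⋯ + pⁿ) · Σ_{i=0}^{p-2} ξ^{p-1-i} ((ξ^i p^k a) * b)`. -/
def bulletOp {A : Type*} [LeftBrace A] (p n k ξ : ℕ) (a b : A) : A :=
  (-(∑ i ∈ Finset.range (n + 1), (p : ℤ) ^ i)) •
    ∑ i ∈ Finset.range (p - 1), (ξ ^ (p - 1 - i)) • bstar ((ξ ^ i * p ^ k) • a) b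

/-- `braceLevel A i = A^{i+1}`: `A^1 = A` and `A^{i+1} = ⟨A * A^i⟩` as an additive subgroup. -/
def braceLevel (A : Type*) [LeftBrace A] : ℕ → AddSubgroup A
  | 0 => ⊤
  | i + 1 => AddSubgroup.closure {z : A | ∃ x : A, ∃ y ∈ braceLevel A i, z = bstar x y}


namespace LeftBrace

variable {A : Type*} [LeftBrace A]

lemma circ_zero (a : A) : circ a (0 : A) = a := by
  have h := circ_add a (0 : A) (0 : A)
  simp only [add_zero] at h
  have : circ a 0 + a = circ a 0 + circ a 0 := h
  have h2 : a = circ a 0 := by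
    have := add_left_cancel this
    exact this
  exact h2.symm

lemma bstar_zero_right (a : A) : bstar a (0 : A) = 0 := by
  simp [bstar, circ_zero]

lemma bstar_add_right (a x y : A) : bstar a (x + y) = bstar a x + bstar a y := by
  have hxy : circ a (x + y) = circ a x + circ a y - a := eq_sub_of_add_eq (circ_add a x y)
  simp only [bstar, hxy]
  abel

/-- `bstar a` as an additive monoid hom. -/
def bstarHom (a : A) : A →+ A where
  toFun := bstar a
  map_zero' := bstar_zero_right a
  map_add' := bstar_add_right a

end LeftBrace

lemma bulletOp_eq_hom {A : Type*} [LeftBrace A] (p n k ξ : ℕ) (a x : A) :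
    bulletOp p n k ξ a x =
      (-(∑ i ∈ Finset.range (n + 1), (p : ℤ) ^ i)) •
        ∑ i ∈ Finset.range (p - 1), (ξ ^ (p - 1 - i)) • (bstarHom ((ξ ^ i * p ^ k) • a)) x :=
  rfl

lemma bulletOp_zero {A : Type*} [LeftBrace A] (p n k ξ : ℕ) (a : A) :
    bulletOp p n k ξ a (0 : A) = 0 := by
  simp [bulletOp_eq_hom]

lemma bulletOp_add {A : Type*} [LeftBrace A] (p n k ξ : ℕ) (a x y : A) :
    bulletOp p n k ξ a (x + y) = bulletOp p n k ξ a x + bulletOp p n k ξ a y := by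
  simp only [bulletOp_eq_hom, map_add, smul_add, Finset.sum_add_distrib]

lemma bulletOp_neg {A : Type*} [LeftBrace A] (p n k ξ : ℕ) (a x : A) :
    bulletOp p n k ξ a (-x) = -bulletOp p n k ξ a x := by
  have h := bulletOp_add p n k ξ a x (-x)
  rw [add_neg_cancel, bulletOp_zero] at h
  exact eq_neg_of_add_eq_zero_right h.symm

lemma nested_bullet_mem_braceLevel {A : Type*} [LeftBrace A] (p n k ξ : ℕ) :
    ∀ (l : List A) (b : A),
      nestedMul (bulletOp p n k ξ) l b ∈ braceLevel A l.length := by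
  intro l
  induction l with
  | nil => intro b; simp [braceLevel, nestedMul]
  | cons a l ih =>
    intro b
    have hv := ih b
    show bulletOp p n k ξ a (nestedMul (bulletOp p n k ξ) l b) ∈ braceLevel A (l.length + 1)
    rw [bulletOp_eq_hom]
    refine AddSubgroup.zsmul_mem _ (AddSubgroup.sum_mem _ ?_) _
    intro i _
    have hmem : bstar ((ξ ^ i * p ^ k) • a)
        (nestedMul (bulletOp p n k ξ) l b) ∈
        {z : A | ∃ x : A, ∃ y ∈ braceLevel A l.length, z = bstar x y} := ⟨_, _, hv, rfl⟩
    exact AddSubgroup.nsmul_mem _ (AddSubgroup.subset_closure hmem) _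

lemma bullet_step {A : Type*} [LeftBrace A] (p n k ξ : ℕ) (a b : A) (m : ℕ) :
    ∀ x ∈ AddSubgroup.closure {v : A | ∃ l' : List A, l'.length = m ∧ v = nestedMul bstar l' b},
      bulletOp p n k ξ a x ∈
        AddSubgroup.closure {v : A | ∃ l' : List A, l'.length = m + 1 ∧ v = nestedMul bstar l' b} := by
  intro x hx
  induction hx using AddSubgroup.closure_induction with
  | mem z hz =>
    obtain ⟨l', hl, rfl⟩ := hz
    rw [bulletOp_eq_hom]
    refine AddSubgroup.zsmul_mem _ (AddSubgroup.sum_mem _ ?_) _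
    intro i _
    have hmem : bstar ((ξ ^ i * p ^ k) • a) (nestedMul bstar l' b) ∈
        {v : A | ∃ l'' : List A, l''.length = m + 1 ∧ v = nestedMul bstar l'' b} :=
      ⟨((ξ ^ i * p ^ k) • a) :: l', by simp [hl], rfl⟩
    exact AddSubgroup.nsmul_mem _ (AddSubgroup.subset_closure hmem) _
  | zero => rw [bulletOp_zero]; exact AddSubgroup.zero_mem _
  | add x y _ _ hx hy => rw [bulletOp_add]; exact AddSubgroup.add_mem _ hx hy
  | neg x _ hx => rw [bulletOp_neg]; exact AddSubgroup.neg_mem _ hx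

lemma nested_bullet_mem_closure {A : Type*} [LeftBrace A] (p n k ξ : ℕ) :
    ∀ (l : List A) (b : A),
      nestedMul (bulletOp p n k ξ) l b ∈
        AddSubgroup.closure {v : A | ∃ l' : List A, l'.length = l.length ∧ v = nestedMul bstar l' b} := by
  intro l
  induction l with
  | nil =>
    intro b
    exact AddSubgroup.subset_closure ⟨[], rfl, rfl⟩
  | cons a l ih =>
    intro b
    exact bullet_step p n k ξ a b l.length _ (ih b)

theorem statement14 {A : Type*} [LeftBrace A] [Fintype A] (p n k : ℕ) (hp : p.Prime)
    (hp3 : 3 < p) (hcard : Fintype.card A = p ^ n)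
    (hk : ∀ a : A, (p ^ (k * (p - 1)) : ℕ) • a = 0)
    -- Property 1' : `A^c ⊆ pA` with `c = ⌊(p-1)/4⌋`
    (hP1' : ∀ x : A, x ∈ braceLevel A ((p - 1) / 4 - 1) → x ∈ pA p 1)
    -- Property 1'' : `a₁ * (⋯ * (a_c * ann(pⁱ))) ⊆ p · ann(pⁱ)`
    (hP1'' : ∀ i : ℕ, 1 ≤ i → ∀ l : List A, l.length = (p - 1) / 4 →
      ∀ b ∈ ann p i, ∃ y ∈ ann p i, nestedMul bstar l b = p • y)
    (γ : ℕ) (hγ : orderOf (γ : ZMod (p ^ n)) = p ^ (n - 1) * (p - 1)) :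
    -- Property 3 for the pre-Lie ring `(A/ann(p^{2k}), +, •)`:
    -- (i) products of `c` elements of the quotient lie in `p · (A/ann(p^{2k}))`
    (∀ (l : List A) (b : A), l.length + 1 = (p - 1) / 4 →
      ∃ y : A, nestedMul (bulletOp p n k (γ ^ p ^ (n - 1))) l b - p • y ∈ ann p (2 * k)) ∧
    -- (ii) products of `c` elements applied to the annihilator of `pⁱ` in the quotient
    -- land in `p` times that annihilator
    (∀ i : ℕ, 1 ≤ i → ∀ l : List A, l.length = (p - 1) / 4 →
      ∀ b : A, (p ^ i : ℕ) • b ∈ ann p (2 * k) →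
        ∃ y : A, (p ^ i : ℕ) • y ∈ ann p (2 * k) ∧
          nestedMul (bulletOp p n k (γ ^ p ^ (n - 1))) l b - p • y ∈ ann p (2 * k)) := by
  constructor
  · -- part (i)
    intro l b hl
    have hv := nested_bullet_mem_braceLevel p n k (γ ^ p ^ (n - 1)) l b
    have hl' : l.length = (p - 1) / 4 - 1 := by omega
    rw [hl'] at hv
    obtain ⟨y, hy⟩ := hP1' _ hv
    refine ⟨y, ?_⟩
    have : nestedMul (bulletOp p n k (γ ^ p ^ (n - 1))) l b - p • y = 0 := by
      rw [← hy, pow_one, sub_self]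
    rw [this]
    simp [ann]
  · -- part (ii)
    intro i hi l hl b hb
    have hb' : b ∈ ann p (2 * k + i) := by
      simp only [ann, Set.mem_setOf_eq] at hb ⊢
      rw [pow_add, mul_smul]
      exact hb
    have hv := nested_bullet_mem_closure p n k (γ ^ p ^ (n - 1)) l b
    rw [hl] at hv
    -- The target set `{p • y | y ∈ ann p (2k+i)}` contains the closure
    have key : ∀ v ∈ AddSubgroup.closure
        {v : A | ∃ l' : List A, l'.length = (p - 1) / 4 ∧ v = nestedMul bstar l' b},
        ∃ y ∈ ann p (2 * k + i), v = p • y := by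
      intro v hvmem
      induction hvmem using AddSubgroup.closure_induction with
      | mem z hz =>
        obtain ⟨l', hl', rfl⟩ := hz
        exact hP1'' (2 * k + i) (by omega) l' hl' b hb'
      | zero => exact ⟨0, by simp [ann], by simp⟩
      | add x y _ _ hx hy =>
        obtain ⟨y1, hy1, rfl⟩ := hx
        obtain ⟨y2, hy2, rfl⟩ := hy
        refine ⟨y1 + y2, ?_, by rw [smul_add]⟩
        simp only [ann, Set.mem_setOf_eq] at hy1 hy2 ⊢
        rw [smul_add, hy1, hy2, add_zero]
      | neg x _ hx =>
        obtain ⟨y1, hy1, rfl⟩ := hx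
        refine ⟨-y1, ?_, by rw [smul_neg]⟩
        simp only [ann, Set.mem_setOf_eq] at hy1 ⊢
        rw [smul_neg, hy1, neg_zero]
    obtain ⟨y, hy, hvy⟩ := key _ hv
    refine ⟨y, ?_, ?_⟩
    · simp only [ann, Set.mem_setOf_eq] at hy ⊢
      rw [smul_smul, ← pow_add]
      exact hy
    · rw [hvy, sub_self]
      simp [ann]
end
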